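/- For every integer p ≥ 2, the function κ ↦ ∫₀^π exp(κ cos θ)(sin θ)^{p-2} dθ is strictly increasing in κ on (0, ∞); equivalently, κ ↦ κ^{1-p/2} I_{p/2-1}(κ) is strictly increasing on (0, ∞). -/
import Mathlib

open Real MeasureTheory intervalIntegral

/-- Modified Bessel function of the first kind of order `r`, via its
integral representation. -/
noncomputable def besselI (r κ : ℝ) : ℝ :=
  (κ / 2) ^ r / (Real.Gamma (r + 1 / 2) * Real.Gamma (1 / 2)) *
    ∫ θ in (0:ℝ)..π, Real.exp (κ * Real.cos θ) * (Real.sin θ) ^ (2 * r)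

lemma cont_integrand (n : ℕ) (κ a b : ℝ) :
    IntervalIntegrable (fun θ => Real.exp (κ * Real.cos θ) * Real.sin θ ^ n) volume a b :=
  (Continuous.intervalIntegrable (by continuity) _ _)

lemma fold_half (n : ℕ) (κ : ℝ) :
    (∫ θ in (0:ℝ)..π, Real.exp (κ * Real.cos θ) * Real.sin θ ^ n)
      = ∫ θ in (0:ℝ)..π/2,
          (Real.exp (κ * Real.cos θ) + Real.exp (-(κ * Real.cos θ))) * Real.sin θ ^ n := by
  have hsplit := intervalIntegral.integral_add_adjacent_intervals
    (cont_integrand n κ 0 (π/2)) (cont_integrand n κ (π/2) π)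
  have hsub : (∫ θ in (π/2)..π, Real.exp (κ * Real.cos θ) * Real.sin θ ^ n)
      = ∫ θ in (0:ℝ)..π/2, Real.exp (-(κ * Real.cos θ)) * Real.sin θ ^ n := by
    have := intervalIntegral.integral_comp_sub_left
      (fun θ => Real.exp (κ * Real.cos θ) * Real.sin θ ^ n) π (a := 0) (b := π/2)
    rw [show π - π/2 = π/2 by ring, sub_zero] at this
    rw [← this]
    refine intervalIntegral.integral_congr fun θ _ => ?_
    simp [Real.cos_pi_sub, Real.sin_pi_sub, mul_neg]
  rw [← hsplit, hsub]
  rw [← intervalIntegral.integral_add (cont_integrand n κ 0 (π/2))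
    (Continuous.intervalIntegrable (by continuity) _ _)]
  refine intervalIntegral.integral_congr fun θ _ => ?_
  ring

lemma mono_part (n : ℕ) :
    StrictMonoOn
      (fun κ : ℝ => ∫ θ in (0:ℝ)..π, Real.exp (κ * Real.cos θ) * Real.sin θ ^ n)
      (Set.Ioi 0) := by
  intro a ha b hb hab
  simp only [fold_half]
  rw [← sub_pos, ← intervalIntegral.integral_sub
    (Continuous.intervalIntegrable (by continuity) _ _)
    (Continuous.intervalIntegrable (by continuity) _ _)]
  refine intervalIntegral_pos_of_pos_on
    (Continuous.intervalIntegrable (by continuity) _ _) (fun θ hθ => ?_) (by positivity)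
  obtain ⟨h1, h2⟩ := hθ
  have hcos : 0 < Real.cos θ := Real.cos_pos_of_mem_Ioo ⟨by linarith [Real.pi_pos], h2⟩
  have hsin : 0 < Real.sin θ := Real.sin_pos_of_pos_of_lt_pi h1 (by linarith [Real.pi_pos])
  have key : Real.exp (a * Real.cos θ) + Real.exp (-(a * Real.cos θ))
      < Real.exp (b * Real.cos θ) + Real.exp (-(b * Real.cos θ)) := by
    have habs : |a * Real.cos θ| < |b * Real.cos θ| := by
      rw [abs_of_pos (mul_pos (Set.mem_Ioi.mp ha) hcos), abs_of_pos (mul_pos (lt_trans (Set.mem_Ioi.mp ha) hab) hcos)]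
      exact mul_lt_mul_of_pos_right hab hcos
    have := Real.cosh_lt_cosh.mpr habs
    rw [Real.cosh_eq, Real.cosh_eq] at this; linarith
  have hsp : (0:ℝ) < Real.sin θ ^ n := pow_pos hsin n
  nlinarith

theorem integral_exp_cos_strictMono (p : ℕ) (hp : 2 ≤ p) :
    StrictMonoOn
      (fun κ : ℝ => ∫ θ in (0:ℝ)..π, Real.exp (κ * Real.cos θ) * (Real.sin θ) ^ (p - 2))
      (Set.Ioi 0) ∧
    StrictMonoOn
      (fun κ : ℝ => κ ^ (1 - (p : ℝ) / 2) * besselI ((p : ℝ) / 2 - 1) κ)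
      (Set.Ioi 0) := by
  refine ⟨mono_part (p - 2), ?_⟩
  set r : ℝ := (p : ℝ) / 2 - 1 with hr
  have hcast : ((p - 2 : ℕ) : ℝ) = (p : ℝ) - 2 := by
    push_cast [Nat.cast_sub hp]; ring
  have hJ : ∀ κ : ℝ,
      (∫ θ in (0:ℝ)..π, Real.exp (κ * Real.cos θ) * (Real.sin θ) ^ (2 * r))
        = ∫ θ in (0:ℝ)..π, Real.exp (κ * Real.cos θ) * (Real.sin θ) ^ (p - 2) := by
    intro κ
    refine intervalIntegral.integral_congr fun θ _ => ?_
    have : 2 * r = ((p - 2 : ℕ) : ℝ) := by rw [hcast, hr]; ring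
    rw [this, Real.rpow_natCast]
  have hDpos : 0 < Real.Gamma (r + 1 / 2) * Real.Gamma (1 / 2) := by
    apply mul_pos <;> apply Real.Gamma_pos_of_pos
    · rw [hr]
      have : (2:ℝ) ≤ (p:ℝ) := by exact_mod_cast hp
      linarith
    · norm_num
  set C : ℝ := (1/2 : ℝ) ^ r / (Real.Gamma (r + 1 / 2) * Real.Gamma (1 / 2)) with hC
  have hCpos : 0 < C := div_pos (Real.rpow_pos_of_pos (by norm_num) r) hDpos
  have heq : ∀ κ ∈ Set.Ioi (0:ℝ),
      κ ^ (1 - (p : ℝ) / 2) * besselI r κ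
        = C * ∫ θ in (0:ℝ)..π, Real.exp (κ * Real.cos θ) * (Real.sin θ) ^ (p - 2) := by
    intro κ hκ
    have hκ0 : (0:ℝ) < κ := hκ
    rw [besselI, hJ]
    have h2 : (κ / 2 : ℝ) ^ r = κ ^ r * (1/2 : ℝ) ^ r := by
      rw [div_eq_mul_one_div, Real.mul_rpow hκ0.le (by norm_num)]
    have h3 : κ ^ (1 - (p : ℝ) / 2) * κ ^ r = 1 := by
      rw [← Real.rpow_add hκ0, hr]
      norm_num
    rw [h2, hC]
    linear_combination ((1/2:ℝ) ^ r / (Real.Gamma (r + 1 / 2) * Real.Gamma (1 / 2)) *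
      ∫ θ in (0:ℝ)..π, Real.exp (κ * Real.cos θ) * (Real.sin θ) ^ (p - 2)) * h3
  intro a ha b hb hab
  simp only
  rw [heq a ha, heq b hb]
  exact mul_lt_mul_of_pos_left (mono_part (p-2) ha hb hab) hCpos
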